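/- arXiv:2307.05773 — 6 statements merged into one kernel-verified Lean document; each statement's English description precedes it below -/
import Mathlib

section
/- Suppose G : [0,∞) → ℝ satisfies the functional equation (final_eq1): G(t) = (c1/(c1+1)) U0(L+t) − (2/(c1+1)) Σ_{n=1}^{⌊c1 t/(2L)⌋} G(t − 2nL/c1) for all t ≥ 0. Then for every t ≥ 0, G(t) = (c1/(c1+1)) U0(L+t) − (2c1/(c1+1)^2) Σ_{n=0}^{⌊c1 t/(2L)⌋ − 1} ((c1−1)/(c1+1))^n U0(L + t − 2(n+1)L/c1). -/
private lemma sum_Icc_zero_aux (f : ℤ → ℝ) : ∀ N : ℕ,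
    ∑ n ∈ Finset.Icc (0:ℤ) ((N:ℤ) - 1), f n = ∑ k ∈ Finset.range N, f k := by
  intro N
  induction N with
  | zero => simp
  | succ n ih =>
    rw [Finset.sum_range_succ, ← ih]
    have h : Finset.Icc (0:ℤ) (((n+1:ℕ):ℤ) - 1) = insert (n:ℤ) (Finset.Icc 0 ((n:ℤ) - 1)) := by
      ext x; simp; omega
    rw [h, Finset.sum_insert (by simp)]
    ring

private lemma sum_Icc_one_aux (f : ℤ → ℝ) : ∀ N : ℕ,
    ∑ n ∈ Finset.Icc (1:ℤ) (N:ℤ), f n = ∑ k ∈ Finset.range N, f ((k:ℤ) + 1) := by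
  intro N
  induction N with
  | zero => simp
  | succ n ih =>
    rw [Finset.sum_range_succ, ← ih]
    have h : Finset.Icc (1:ℤ) ((n+1:ℕ):ℤ) = insert ((n:ℤ)+1) (Finset.Icc 1 (n:ℤ)) := by
      ext x; simp; omega
    rw [h, Finset.sum_insert (by simp)]
    ring

/-- If `G` satisfies the functional equation (final_eq1), then `G` is given by
the explicit d'Alembert-type formula (eq_solution). -/
theorem stmt_0 (L c1 : ℝ) (hL : 0 < L) (hc1 : 0 < c1)
    (U0 : ℝ → ℝ) (hU0 : ∀ x ≤ L, U0 x = 0)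
    (G : ℝ → ℝ)
    (hG : ∀ t : ℝ, 0 ≤ t →
      G t = c1 / (c1 + 1) * U0 (L + t)
        - 2 / (c1 + 1) * ∑ n ∈ Finset.Icc (1 : ℤ) ⌊c1 * t / (2 * L)⌋,
            G (t - 2 * (n : ℝ) * L / c1)) :
    ∀ t : ℝ, 0 ≤ t →
      G t = c1 / (c1 + 1) * U0 (L + t)
        - 2 * c1 / (c1 + 1) ^ 2 * ∑ n ∈ Finset.Icc (0 : ℤ) (⌊c1 * t / (2 * L)⌋ - 1),
            ((c1 - 1) / (c1 + 1)) ^ n * U0 (L + t - 2 * ((n : ℝ) + 1) * L / c1) := by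
  have hc : c1 + 1 ≠ 0 := by positivity
  -- key: rewrite everything with range sums, induct on N = toNat of floor
  have key : ∀ N : ℕ, ∀ t : ℝ, 0 ≤ t → ⌊c1 * t / (2 * L)⌋ = (N : ℤ) →
      G t = c1 / (c1 + 1) * U0 (L + t)
        - 2 * c1 / (c1 + 1) ^ 2 * ∑ k ∈ Finset.range N,
            ((c1 - 1) / (c1 + 1)) ^ k * U0 (L + t - 2 * ((k:ℝ) + 1) * L / c1) := by
    intro N
    induction N with
    | zero =>
      intro t ht hfl
      rw [hG t ht, hfl]
      simp
    | succ N ih =>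
      intro t ht hfl
      set t' := t - 2 * L / c1 with ht'def
      have hfl' : (N:ℤ) + 1 ≤ c1 * t / (2 * L) := by
        have := Int.le_floor.mpr (le_of_eq hfl.symm)
        exact_mod_cast Int.le_floor.mp (le_of_eq hfl.symm)
      have harg : c1 * t' / (2 * L) = c1 * t / (2 * L) - 1 := by
        field_simp [ht'def]
        rw [ht'def, mul_sub, mul_div_assoc', mul_div_cancel_left₀ _ hc1.ne']
      have ht'0 : 0 ≤ t' := by
        have h1 : (1:ℝ) ≤ c1 * t / (2 * L) := by
          have : ((N:ℝ) + 1) ≤ c1 * t / (2 * L) := by exact_mod_cast hfl'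
          linarith [Nat.cast_nonneg (α := ℝ) N]
        have h2 : 2 * L ≤ c1 * t := by
          have h2L : (0:ℝ) < 2 * L := by linarith
          calc 2 * L = 1 * (2 * L) := by ring
            _ ≤ (c1 * t / (2 * L)) * (2 * L) := by
                apply mul_le_mul_of_nonneg_right h1 (le_of_lt h2L)
            _ = c1 * t := by field_simp
        rw [ht'def, sub_nonneg, div_le_iff₀ hc1]
        linarith
      have hflt' : ⌊c1 * t' / (2 * L)⌋ = (N : ℤ) := by
        rw [harg]
        rw [show c1 * t / (2*L) - 1 = c1 * t / (2*L) + (-1:ℤ) by push_cast; ring,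
          Int.floor_add_intCast, hfl]
        push_cast
        ring
      -- rewrite hG at t and t' using range sums
      have hGt := hG t ht
      have hGt' := hG t' ht'0
      rw [hfl, sum_Icc_one_aux] at hGt
      rw [hflt', sum_Icc_one_aux] at hGt'
      push_cast at hGt hGt'
      have hsplit : ∑ k ∈ Finset.range (N+1), G (t - 2 * ((k:ℝ) + 1) * L / c1)
          = (∑ k ∈ Finset.range N, G (t' - 2 * ((k:ℝ) + 1) * L / c1)) + G t' := by
        rw [Finset.sum_range_succ']
        congr 1
        · apply Finset.sum_congr rfl
          intro k _
          congr 1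
          push_cast
          rw [ht'def]; ring
        · rw [show t - 2 * (((0:ℕ):ℝ) + 1) * L / c1 = t' from by rw [ht'def]; push_cast; ring]
      rw [hsplit] at hGt
      set S := ∑ k ∈ Finset.range N, G (t' - 2 * ((k:ℝ) + 1) * L / c1) with hS
      have hkey : G t = c1 / (c1 + 1) * U0 (L + t) - c1 / (c1 + 1) * U0 (L + t')
          + (c1 - 1) / (c1 + 1) * G t' := by
        field_simp at hGt hGt' ⊢
        linarith
      rw [hkey, ih t' ht'0 hflt', Finset.sum_range_succ']
      push_cast
      have e0 : L + t - 2 * ((0:ℝ) + 1) * L / c1 = L + t' := by rw [ht'def]; ring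
      have hsum2 : ∑ k ∈ Finset.range N,
            ((c1-1)/(c1+1))^(k+1) * U0 (L + t - 2*((k:ℝ)+1+1)*L/c1)
          = (c1-1)/(c1+1) * ∑ k ∈ Finset.range N,
            ((c1-1)/(c1+1))^k * U0 (L + t' - 2*((k:ℝ)+1)*L/c1) := by
        rw [Finset.mul_sum]
        apply Finset.sum_congr rfl
        intro k _
        rw [show L + t - 2*((k:ℝ)+1+1)*L/c1 = L + t' - 2*((k:ℝ)+1)*L/c1 from by
          rw [ht'def]; ring]
        ring
      rw [hsum2, e0]
      set S' := ∑ k ∈ Finset.range N,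
        ((c1-1)/(c1+1))^k * U0 (L + t' - 2*((k:ℝ)+1)*L/c1) with hS'
      field_simp
      ring
  intro t ht
  have hfl0 : 0 ≤ ⌊c1 * t / (2 * L)⌋ := by
    apply Int.floor_nonneg.mpr
    positivity
  have := key ⌊c1 * t / (2 * L)⌋.toNat t ht (by omega)
  rw [this]
  congr 1
  rw [show (⌊c1 * t / (2 * L)⌋ - 1) = ((⌊c1 * t / (2*L)⌋.toNat : ℤ) - 1) by omega]
  rw [sum_Icc_zero_aux (fun n => ((c1 - 1) / (c1 + 1)) ^ n * U0 (L + t - 2 * ((n:ℝ) + 1) * L / c1))]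
  congr 1
end

section
/- Define G : [0,∞) → ℝ by the explicit formula (eq_solution): G(t) = (c1/(c1+1)) U0(L+t) − (2c1/(c1+1)^2) Σ_{n=0}^{⌊c1 t/(2L)⌋ − 1} ((c1−1)/(c1+1))^n U0(L + t − 2(n+1)L/c1). Then G satisfies the functional equation (final_eq1): G(t) = (c1/(c1+1)) U0(L+t) − (2/(c1+1)) Σ_{n=1}^{⌊c1 t/(2L)⌋} G(t − 2nL/c1) for all t ≥ 0. -/
lemma sumIccRange (N : ℕ) (f : ℤ → ℝ) :
    ∑ n ∈ Finset.Icc (0:ℤ) ((N:ℤ) - 1), f n = ∑ n ∈ Finset.range N, f n := by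
  refine Finset.sum_nbij' (fun n => n.toNat) (fun n => (n:ℤ)) ?_ ?_ ?_ ?_ ?_ <;>
    intros a h <;> simp only [Finset.mem_Icc, Finset.mem_range] at * <;>
    first
    | omega
    | (congr 1; omega)

lemma sumIccRange1 (N : ℕ) (f : ℤ → ℝ) :
    ∑ n ∈ Finset.Icc (1:ℤ) (N:ℤ), f n = ∑ n ∈ Finset.range N, f ((n:ℤ) + 1) := by
  refine Finset.sum_nbij' (fun n => (n - 1).toNat) (fun n => (n:ℤ) + 1) ?_ ?_ ?_ ?_ ?_ <;>
    intros a h <;> simp only [Finset.mem_Icc, Finset.mem_range] at * <;>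
    first
    | omega
    | (congr 1; omega)

lemma key (c1 : ℝ) (hc1 : 0 < c1) (f : ℕ → ℝ) (N : ℕ) :
    2 / (c1+1) * ∑ n ∈ Finset.range N,
        (c1/(c1+1) * f (n+1)
          - 2*c1/(c1+1)^2 * ∑ m ∈ Finset.range (N - (n+1)),
              ((c1-1)/(c1+1))^m * f (n+1+m+1))
    = 2*c1/(c1+1)^2 * ∑ n ∈ Finset.range N, ((c1-1)/(c1+1))^n * f (n+1) := by
  have hc : c1 + 1 ≠ 0 := by positivity
  induction N with
  | zero => simp
  | succ N ih =>
    have hstep : ∀ n ∈ Finset.range N,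
        (c1/(c1+1) * f (n+1)
          - 2*c1/(c1+1)^2 * ∑ m ∈ Finset.range (N + 1 - (n+1)),
              ((c1-1)/(c1+1))^m * f (n+1+m+1))
        = (c1/(c1+1) * f (n+1)
          - 2*c1/(c1+1)^2 * ∑ m ∈ Finset.range (N - (n+1)),
              ((c1-1)/(c1+1))^m * f (n+1+m+1))
          - 2*c1/(c1+1)^2 * (((c1-1)/(c1+1))^(N - 1 - n) * f (N+1)) := by
      intro n hn
      simp only [Finset.mem_range] at hn
      have h1 : N + 1 - (n+1) = (N - (n+1)) + 1 := by omega
      rw [h1, Finset.sum_range_succ]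
      have h2 : N - (n + 1) = N - 1 - n := by omega
      rw [h2]
      have h3 : n + 1 + (N - 1 - n) + 1 = N + 1 := by omega
      rw [h3]
      ring
    rw [Finset.sum_range_succ, Finset.sum_range_succ, Finset.sum_congr rfl hstep]
    simp only [Nat.sub_self, Finset.range_zero, Finset.sum_empty, mul_zero, sub_zero]
    have h4 : ∑ n ∈ Finset.range N,
        (2*c1/(c1+1)^2 * (((c1-1)/(c1+1))^(N-1-n) * f (N+1)))
        = 2*c1/(c1+1)^2 * ((∑ j ∈ Finset.range N, ((c1-1)/(c1+1))^j) * f (N+1)) := by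
      rw [← Finset.sum_range_reflect (fun j => ((c1-1)/(c1+1))^j) N]
      simp only [Finset.mul_sum, Finset.sum_mul]
    rw [Finset.sum_sub_distrib, h4]
    have hgeom : (∑ j ∈ Finset.range N, ((c1-1)/(c1+1))^j) * ((c1-1)/(c1+1) - 1)
        = ((c1-1)/(c1+1))^N - 1 := geom_sum_mul _ _
    set S := ∑ j ∈ Finset.range N, ((c1-1)/(c1+1))^j with hSdef
    set P := ((c1-1)/(c1+1))^N with hPdef
    set F := f (N+1) with hFdef
    have h5 : S = (1 - P)*(c1+1)/2 := by
      field_simp at hgeom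
      linarith [hgeom]
    have hkey : 2/(c1+1) * (c1/(c1+1) * F - 2*c1/(c1+1)^2 * (S * F))
        = 2*c1/(c1+1)^2 * (P * F) := by
      rw [h5]; field_simp; ring
    linear_combination ih + hkey

/-- If `G` is defined by the explicit formula (eq_solution), then `G` satisfies
the functional equation (final_eq1). -/
theorem stmt_1 (L c1 : ℝ) (hL : 0 < L) (hc1 : 0 < c1)
    (U0 : ℝ → ℝ) (hU0 : ∀ x ≤ L, U0 x = 0)
    (G : ℝ → ℝ)
    (hG : ∀ t : ℝ, 0 ≤ t →
      G t = c1 / (c1 + 1) * U0 (L + t)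
        - 2 * c1 / (c1 + 1) ^ 2 * ∑ n ∈ Finset.Icc (0 : ℤ) (⌊c1 * t / (2 * L)⌋ - 1),
            ((c1 - 1) / (c1 + 1)) ^ n * U0 (L + t - 2 * ((n : ℝ) + 1) * L / c1)) :
    ∀ t : ℝ, 0 ≤ t →
      G t = c1 / (c1 + 1) * U0 (L + t)
        - 2 / (c1 + 1) * ∑ n ∈ Finset.Icc (1 : ℤ) ⌊c1 * t / (2 * L)⌋,
            G (t - 2 * (n : ℝ) * L / c1) := by
  intro t ht
  have hc0 : c1 ≠ 0 := ne_of_gt hc1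
  have hcp : c1 + 1 ≠ 0 := by positivity
  have h2L : (0:ℝ) < 2 * L := by positivity
  set N : ℤ := ⌊c1 * t / (2 * L)⌋ with hNdef
  have hN0 : 0 ≤ N := Int.floor_nonneg.mpr (by positivity)
  rw [hG t ht]
  have hGn : ∀ n ∈ Finset.Icc (1:ℤ) N, G (t - 2 * (n:ℝ) * L / c1)
      = c1 / (c1+1) * U0 (L + t - 2*(n:ℝ)*L/c1)
        - 2*c1/(c1+1)^2 * ∑ m ∈ Finset.Icc (0:ℤ) (N - n - 1),
            ((c1-1)/(c1+1))^m * U0 (L + t - 2*((n:ℝ)+((m:ℝ)+1))*L/c1) := by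
    intro n hn
    simp only [Finset.mem_Icc] at hn
    have hle : (n:ℝ) ≤ c1 * t / (2*L) := by
      calc (n:ℝ) ≤ (N:ℝ) := by exact_mod_cast hn.2
        _ ≤ c1 * t / (2*L) := Int.floor_le _
    have ht' : 0 ≤ t - 2*(n:ℝ)*L/c1 := by
      rw [le_div_iff₀ h2L] at hle
      rw [sub_nonneg, div_le_iff₀ hc1]
      nlinarith
    rw [hG _ ht']
    have hfl : ⌊c1 * (t - 2*(n:ℝ)*L/c1) / (2*L)⌋ = N - n := by
      have harg : c1 * (t - 2*(n:ℝ)*L/c1) / (2*L) = c1 * t / (2*L) - (n:ℝ) := by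
        field_simp
      rw [harg, Int.floor_sub_intCast]
    rw [hfl]
    congr 1
    · congr 1
      ring
    · congr 1
      refine Finset.sum_congr rfl fun m hm => ?_
      congr 2
      field_simp
      ring
  rw [Finset.sum_congr rfl hGn]
  obtain ⟨K, hK⟩ := Int.eq_ofNat_of_zero_le hN0
  set f : ℕ → ℝ := fun k => U0 (L + t - 2*(k:ℝ)*L/c1) with hfdef
  have hL1 : ∑ n ∈ Finset.Icc (0:ℤ) (N - 1),
      ((c1-1)/(c1+1))^n * U0 (L + t - 2 * ((n:ℝ) + 1) * L / c1)
      = ∑ n ∈ Finset.range K, ((c1-1)/(c1+1))^n * f (n+1) := by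
    rw [hK, sumIccRange K]
    refine Finset.sum_congr rfl fun n _ => ?_
    rw [zpow_natCast]
    simp only [hfdef]
    congr 2
    push_cast
    ring
  have hR1 : ∑ n ∈ Finset.Icc (1:ℤ) N,
      (c1 / (c1+1) * U0 (L + t - 2*(n:ℝ)*L/c1)
        - 2*c1/(c1+1)^2 * ∑ m ∈ Finset.Icc (0:ℤ) (N - n - 1),
            ((c1-1)/(c1+1))^m * U0 (L + t - 2*((n:ℝ)+((m:ℝ)+1))*L/c1))
      = ∑ n ∈ Finset.range K,
        (c1/(c1+1) * f (n+1)
          - 2*c1/(c1+1)^2 * ∑ m ∈ Finset.range (K - (n+1)),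
              ((c1-1)/(c1+1))^m * f (n+1+m+1)) := by
    rw [hK, sumIccRange1 K]
    refine Finset.sum_congr rfl fun n hn => ?_
    simp only [Finset.mem_range] at hn
    have hb : (K:ℤ) - ((n:ℤ) + 1) - 1 = ((K - (n+1) : ℕ) : ℤ) - 1 := by
      omega
    rw [hb, sumIccRange (K - (n+1))]
    simp only [hfdef]
    refine congr_arg₂ (· - ·) ?_ ?_
    · exact congrArg (fun z => c1/(c1+1) * z) (congrArg U0 (by push_cast; ring))
    · refine congrArg (fun z => 2*c1/(c1+1)^2 * z) ?_
      refine Finset.sum_congr rfl fun m _ => ?_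
      exact congr_arg₂ (· * ·) (zpow_natCast _ _) (congrArg U0 (by push_cast; ring))
  rw [hL1, hR1]
  congr 1
  exact (key c1 hc1 f K).symm
end

section
/- Let D > 0, let G : [0,∞) → ℝ be given by (eq_solution), and set m(t) := u(L+D, t) where u is defined by (sol_un_1). Then for 0 ≤ t < D, m(t) = (1/2) U0(L+D+t) + (1/2) U0(L+D−t), and for t > D, m(t) = (1/2) U0(L+D+t) + (1/2)((c1−1)/(c1+1)) U0(L−D+t) − 2c1 Σ_{n=0}^{⌊c1(t−D)/(2L)⌋ − 1} ((c1−1)^n/(c1+1)^{n+2}) U0(L − D − 2(n+1)L/c1 + t). -/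
/-- d'Alembert form of the measured data `m(t) = u(L+D, t)`, where `G` is given by
(eq_solution) and `u` by (sol_un_1). -/
theorem stmt_2 (L c1 D : ℝ) (hL : 0 < L) (hc1 : 0 < c1) (hD : 0 < D)
    (U0 : ℝ → ℝ) (hU0 : ∀ x ≤ L, U0 x = 0)
    (G : ℝ → ℝ)
    (hG : ∀ t : ℝ, 0 ≤ t →
      G t = c1 / (c1 + 1) * U0 (L + t)
        - 2 * c1 / (c1 + 1) ^ 2 * ∑ n ∈ Finset.Icc (0 : ℤ) (⌊c1 * t / (2 * L)⌋ - 1),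
            ((c1 - 1) / (c1 + 1)) ^ n * U0 (L + t - 2 * ((n : ℝ) + 1) * L / c1))
    (u : ℝ → ℝ → ℝ)
    (hu1 : ∀ x t : ℝ, 0 ≤ t → L + t < x →
      u x t = 1 / 2 * U0 (x + t) + 1 / 2 * U0 (x - t))
    (hu2 : ∀ x t : ℝ, 0 ≤ t → L ≤ x → x < L + t →
      u x t = 1 / 2 * U0 (x + t) + G (t - x + L) - 1 / 2 * U0 (t - x + 2 * L))
    (m : ℝ → ℝ) (hm : ∀ t : ℝ, m t = u (L + D) t) :
    (∀ t : ℝ, 0 ≤ t → t < D →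
      m t = 1 / 2 * U0 (L + D + t) + 1 / 2 * U0 (L + D - t)) ∧
    (∀ t : ℝ, D < t →
      m t = 1 / 2 * U0 (L + D + t) + 1 / 2 * ((c1 - 1) / (c1 + 1)) * U0 (L - D + t)
        - 2 * c1 * ∑ n ∈ Finset.Icc (0 : ℤ) (⌊c1 * (t - D) / (2 * L)⌋ - 1),
            (c1 - 1) ^ n / (c1 + 1) ^ (n + 2)
              * U0 (L - D - 2 * ((n : ℝ) + 1) * L / c1 + t)) := by
  have hc : c1 + 1 ≠ 0 := by positivity
  constructor
  · intro t ht htD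
    rw [hm, hu1 (L + D) t ht (by linarith)]
  · intro t htD
    have ht0 : 0 ≤ t := le_of_lt (hD.trans htD)
    rw [hm, hu2 (L + D) t ht0 (by linarith) (by linarith),
      show t - (L + D) + L = t - D by ring, hG (t - D) (by linarith),
      show t - (L + D) + 2 * L = L - D + t by ring,
      show L + (t - D) = L - D + t by ring]
    have hsum : (2 : ℝ) * c1 / (c1 + 1) ^ 2 *
        ∑ n ∈ Finset.Icc (0 : ℤ) (⌊c1 * (t - D) / (2 * L)⌋ - 1),
          ((c1 - 1) / (c1 + 1)) ^ n * U0 (L - D + t - 2 * ((n : ℝ) + 1) * L / c1)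
        = 2 * c1 * ∑ n ∈ Finset.Icc (0 : ℤ) (⌊c1 * (t - D) / (2 * L)⌋ - 1),
          (c1 - 1) ^ n / (c1 + 1) ^ (n + 2) * U0 (L - D - 2 * ((n : ℝ) + 1) * L / c1 + t) := by
      rw [Finset.mul_sum, Finset.mul_sum]
      refine Finset.sum_congr rfl fun n hn => ?_
      rw [show L - D - 2 * ((n : ℝ) + 1) * L / c1 + t = L - D + t - 2 * ((n : ℝ) + 1) * L / c1 by ring,
        div_zpow, zpow_add₀ hc, zpow_two]
      have hP : (c1 + 1) ^ n ≠ 0 := zpow_ne_zero n hc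
      generalize U0 (L - D + t - 2 * ((n : ℝ) + 1) * L / c1) = A
      rw [pow_two (c1 + 1)]
      simp only [div_eq_mul_inv, mul_inv]
      ring
    rw [hsum]
    field_simp
    ring
end

section
/- Let v be defined by (sol_bou_1). Then: (i) v(L,t) = H(t) for all t ≥ 0; (ii) v(0,t) = 0 for all t ≥ 0; (iii) v(x,t) = 0 for all (x,t) with 0 < x < L and 0 ≤ t < (L−x)/c1; in particular v(x,0) = 0 for 0 < x < L. -/
lemma telescope_aux (f : ℤ → ℝ) (m : ℤ) (hm : 0 ≤ m) :
    (∑ n ∈ Finset.Icc (0 : ℤ) m, f n) -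
      (∑ n ∈ Finset.Icc (0 : ℤ) (m - 1), f (n + 1)) = f 0 := by
  have h1 : (∑ n ∈ Finset.Icc (0 : ℤ) (m - 1), f (n + 1))
      = ∑ n ∈ Finset.Icc (1 : ℤ) m, f n := by
    rw [show (1 : ℤ) = 0 + 1 by ring, show m = m - 1 + 1 by ring,
      ← Finset.map_add_right_Icc, Finset.sum_map]
    norm_num [addRightEmbedding]
  have h2 : Finset.Icc (1 : ℤ) m = Finset.Ioc 0 m := by
    ext n; simp; omega
  rw [h1, h2, ← Finset.Icc_erase_left,
    ← Finset.add_sum_erase _ f (Finset.mem_Icc.mpr ⟨le_rfl, hm⟩)]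
  ring

/-- boundary and initial behaviour of `v` defined by (sol_bou_1):
(i) `v(L,t) = H(t)`, (ii) `v(0,t) = 0`, (iii) `v(x,t) = 0` for `0 < x < L`,
`0 ≤ t < (L-x)/c1` (in particular `v(x,0) = 0`). -/
theorem stmt_4 (L c1 : ℝ) (hL : 0 < L) (hc1 : 0 < c1)
    (H : ℝ → ℝ) (v : ℝ → ℝ → ℝ)
    (hv : ∀ x t : ℝ, 0 ≤ x → x ≤ L → 0 ≤ t →
      v x t = (∑ n ∈ Finset.Icc (0 : ℤ) ⌊(c1 * t + x - L) / (2 * L)⌋,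
                  H (t + (x - (2 * (n : ℝ) + 1) * L) / c1))
            - ∑ n ∈ Finset.Icc (0 : ℤ) ⌊(c1 * t - x - L) / (2 * L)⌋,
                  H (t - (x + (2 * (n : ℝ) + 1) * L) / c1)) :
    (∀ t : ℝ, 0 ≤ t → v L t = H t) ∧
    (∀ t : ℝ, 0 ≤ t → v 0 t = 0) ∧
    (∀ x t : ℝ, 0 < x → x < L → 0 ≤ t → t < (L - x) / c1 → v x t = 0) := by
  refine ⟨?_, ?_, ?_⟩
  · intro t ht
    rw [hv L t (le_of_lt hL) le_rfl ht]
    have h1 : (c1 * t + L - L) / (2 * L) = c1 * t / (2 * L) := by ring_nf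
    have h2 : (c1 * t - L - L) / (2 * L) = c1 * t / (2 * L) - 1 := by
      field_simp; ring
    have h2' : ⌊(c1 * t - L - L) / (2 * L)⌋ = ⌊c1 * t / (2 * L)⌋ - 1 := by
      rw [h2, show (1 : ℝ) = ((1 : ℤ) : ℝ) by norm_num, Int.floor_sub_intCast]
    rw [h1, h2']
    have hm : 0 ≤ ⌊c1 * t / (2 * L)⌋ :=
      Int.floor_nonneg.mpr (by positivity)
    have e1 : ∀ n : ℤ, H (t + (L - (2 * (n : ℝ) + 1) * L) / c1)
        = H (t - 2 * (n : ℝ) * L / c1) := by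
      intro n; congr 1; ring
    have e2 : ∀ n : ℤ, H (t - (L + (2 * (n : ℝ) + 1) * L) / c1)
        = H (t - 2 * ((n : ℝ) + 1) * L / c1) := by
      intro n; congr 1; ring
    calc (∑ n ∈ Finset.Icc (0 : ℤ) ⌊c1 * t / (2 * L)⌋,
            H (t + (L - (2 * (n : ℝ) + 1) * L) / c1))
          - ∑ n ∈ Finset.Icc (0 : ℤ) (⌊c1 * t / (2 * L)⌋ - 1),
            H (t - (L + (2 * (n : ℝ) + 1) * L) / c1)
        = (∑ n ∈ Finset.Icc (0 : ℤ) ⌊c1 * t / (2 * L)⌋,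
            H (t - 2 * (n : ℝ) * L / c1))
          - ∑ n ∈ Finset.Icc (0 : ℤ) (⌊c1 * t / (2 * L)⌋ - 1),
            H (t - 2 * ((n : ℝ) + 1) * L / c1) := by
          rw [Finset.sum_congr rfl fun n _ => e1 n,
            Finset.sum_congr rfl fun n _ => e2 n]
      _ = H (t - 2 * ((0 : ℤ) : ℝ) * L / c1) := by
          have := telescope_aux (fun n : ℤ => H (t - 2 * (n : ℝ) * L / c1))
            ⌊c1 * t / (2 * L)⌋ hm
          simp only [Int.cast_add, Int.cast_one] at this ⊢
          exact this
      _ = H t := by norm_num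
  · intro t ht
    rw [hv 0 t le_rfl (le_of_lt hL) ht]
    rw [sub_eq_zero]
    apply Finset.sum_congr
    · norm_num
    · intro n _; congr 1; ring
  · intro x t hx hxL ht htL
    rw [hv x t (le_of_lt hx) (le_of_lt hxL) ht]
    have hnum : c1 * t + x - L < 0 := by
      have := (lt_div_iff₀ hc1).mp htL; nlinarith
    have hnum2 : c1 * t - x - L < 0 := by linarith
    have hf1 : ⌊(c1 * t + x - L) / (2 * L)⌋ < 0 := by
      by_contra h
      have : 0 ≤ (c1 * t + x - L) / (2 * L) := Int.floor_nonneg.mp (by omega)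
      have : (c1 * t + x - L) / (2 * L) < 0 := div_neg_of_neg_of_pos hnum (by positivity)
      linarith
    have hf2 : ⌊(c1 * t - x - L) / (2 * L)⌋ < 0 := by
      by_contra h
      have : 0 ≤ (c1 * t - x - L) / (2 * L) := Int.floor_nonneg.mp (by omega)
      have : (c1 * t - x - L) / (2 * L) < 0 := div_neg_of_neg_of_pos hnum2 (by positivity)
      linarith
    rw [Finset.Icc_eq_empty (by omega), Finset.Icc_eq_empty (by omega)]
    simp
end

section
/- Assume H : ℝ → ℝ is twice continuously differentiable and H(s) = 0 for all s ≤ 0. Then the function v defined by (sol_bou_1) is twice continuously differentiable on the open region {(x,t) : 0 < x < L, t > 0} and satisfies the wave equation ∂²v/∂t² (x,t) = c1² ∂²v/∂x² (x,t) there. -/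
noncomputable def wsum (L c1 : ℝ) (H : ℝ → ℝ) (N : ℤ) (x t : ℝ) : ℝ :=
  (∑ n ∈ Finset.Icc (0:ℤ) N, H (t + (x - (2*(n:ℝ)+1)*L)/c1))
  - ∑ n ∈ Finset.Icc (0:ℤ) N, H (t - (x + (2*(n:ℝ)+1)*L)/c1)

lemma wsum_contDiff (L c1 : ℝ) (hc1 : 0 < c1) (H : ℝ → ℝ) (hH : ContDiff ℝ 2 H) (N : ℤ) :
    ContDiff ℝ 2 (Function.uncurry (wsum L c1 H N)) := by
  have hc1' : c1 ≠ 0 := ne_of_gt hc1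
  unfold wsum Function.uncurry
  apply ContDiff.sub
  · exact ContDiff.sum fun n _ => hH.comp (by fun_prop (disch := simp [hc1']))
  · exact ContDiff.sum fun n _ => hH.comp (by fun_prop (disch := simp [hc1']))

lemma sums_eq_wsum (L c1 : ℝ) (hL : 0 < L) (hc1 : 0 < c1) (H : ℝ → ℝ)
    (hH0 : ∀ s ≤ (0:ℝ), H s = 0) (x t : ℝ)
    (N : ℤ) (h1 : ⌊(c1 * t + x - L) / (2 * L)⌋ ≤ N) (h2 : ⌊(c1 * t - x - L) / (2 * L)⌋ ≤ N) :
    ((∑ n ∈ Finset.Icc (0 : ℤ) ⌊(c1 * t + x - L) / (2 * L)⌋,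
        H (t + (x - (2 * (n : ℝ) + 1) * L) / c1))
      - ∑ n ∈ Finset.Icc (0 : ℤ) ⌊(c1 * t - x - L) / (2 * L)⌋,
        H (t - (x + (2 * (n : ℝ) + 1) * L) / c1)) = wsum L c1 H N x t := by
  unfold wsum
  congr 1
  · apply Finset.sum_subset (Finset.Icc_subset_Icc_right h1)
    intro n hn hn'
    simp only [Finset.mem_Icc] at hn hn'
    have hfl : ⌊(c1 * t + x - L) / (2 * L)⌋ < n := by omega
    have hlt : (c1 * t + x - L) / (2 * L) < (n : ℝ) := by
      exact_mod_cast Int.floor_lt.mp hfl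
    have hlt2 : c1 * t + x - L < (n : ℝ) * (2 * L) := (div_lt_iff₀ (by linarith)).mp hlt
    apply hH0
    have harg : t + (x - (2 * (n:ℝ) + 1) * L) / c1 = (c1 * t + x - (2 * (n:ℝ) + 1) * L) / c1 := by
      field_simp; ring
    rw [harg]
    apply le_of_lt (div_neg_of_neg_of_pos _ hc1)
    nlinarith
  · apply Finset.sum_subset (Finset.Icc_subset_Icc_right h2)
    intro n hn hn'
    simp only [Finset.mem_Icc] at hn hn'
    have hfl : ⌊(c1 * t - x - L) / (2 * L)⌋ < n := by omega
    have hlt : (c1 * t - x - L) / (2 * L) < (n : ℝ) := by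
      exact_mod_cast Int.floor_lt.mp hfl
    have hlt2 : c1 * t - x - L < (n : ℝ) * (2 * L) := (div_lt_iff₀ (by linarith)).mp hlt
    apply hH0
    have harg : t - (x + (2 * (n:ℝ) + 1) * L) / c1 = (c1 * t - (x + (2 * (n:ℝ) + 1) * L)) / c1 := by
      field_simp
    rw [harg]
    apply le_of_lt (div_neg_of_neg_of_pos _ hc1)
    nlinarith

lemma diff_affine_mul (f : ℝ → ℝ) (hf : Differentiable ℝ f) (c a b : ℝ) :
    Differentiable ℝ (fun y => c * f (a * y + b)) :=
  ((hf.comp ((differentiable_id.const_mul a).add_const b))).const_mul c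

lemma deriv_affine_mul (f : ℝ → ℝ) (hf : Differentiable ℝ f) (c a b : ℝ) :
    deriv (fun y => c * f (a * y + b)) = fun x => c * a * deriv f (a * x + b) := by
  funext x
  have hg : HasDerivAt (fun y : ℝ => a * y + b) a x := by
    simpa using ((hasDerivAt_id x).const_mul a).add_const b
  have h : HasDerivAt (fun y => c * f (a * y + b)) (c * (deriv f (a * x + b) * a)) x := by
    simpa [Function.comp] using (((hf (a*x+b)).hasDerivAt.comp x hg).const_mul c)
  rw [h.deriv]; ring

lemma first_deriv {ι : Type*} (f : ℝ → ℝ) (hf : Differentiable ℝ f) (A : Finset ι)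
    (a a' c c' : ℝ) (b b' : ι → ℝ) :
    deriv (fun y => (∑ n ∈ A, c * f (a * y + b n)) - ∑ n ∈ A, c' * f (a' * y + b' n))
      = fun x => (∑ n ∈ A, c * a * deriv f (a * x + b n))
                - ∑ n ∈ A, c' * a' * deriv f (a' * x + b' n) := by
  funext x
  rw [deriv_fun_sub
      ((Differentiable.fun_sum fun n _ => diff_affine_mul f hf c a (b n)).differentiableAt)
      ((Differentiable.fun_sum fun n _ => diff_affine_mul f hf c' a' (b' n)).differentiableAt),
    deriv_fun_sum (fun n _ => (diff_affine_mul f hf c a (b n)).differentiableAt),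
    deriv_fun_sum (fun n _ => (diff_affine_mul f hf c' a' (b' n)).differentiableAt)]
  congr 1 <;> exact Finset.sum_congr rfl fun n _ => congrFun (deriv_affine_mul f hf _ _ _) x

lemma second_deriv {ι : Type*} (f : ℝ → ℝ) (hf : ContDiff ℝ 2 f) (A : Finset ι)
    (a a' c c' : ℝ) (b b' : ι → ℝ) :
    deriv (deriv (fun y => (∑ n ∈ A, c * f (a * y + b n)) - ∑ n ∈ A, c' * f (a' * y + b' n)))
      = fun x => (∑ n ∈ A, c * a * a * deriv (deriv f) (a * x + b n))
                - ∑ n ∈ A, c' * a' * a' * deriv (deriv f) (a' * x + b' n) := by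
  have hfd : Differentiable ℝ f := hf.differentiable (by norm_num)
  have hf' : Differentiable ℝ (deriv f) := by
    have h : ContDiff ℝ ((1:ℕ)+1) f := by exact_mod_cast hf
    exact ((contDiff_succ_iff_deriv.mp h).2.2).differentiable (by norm_num)
  rw [first_deriv f hfd A a a' c c' b b', first_deriv (deriv f) hf' A a a' (c*a) (c'*a') b b']

/-- for `H` twice continuously differentiable with `H = 0` on `(-∞,0]`,
the function `v` of (sol_bou_1) is twice continuously differentiable on the open region
`{0 < x < L, t > 0}` and satisfies the wave equation `v_tt = c1² v_xx` there. -/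
theorem stmt_5 (L c1 : ℝ) (hL : 0 < L) (hc1 : 0 < c1)
    (H : ℝ → ℝ) (hH : ContDiff ℝ 2 H) (hH0 : ∀ s ≤ (0 : ℝ), H s = 0)
    (v : ℝ → ℝ → ℝ)
    (hv : ∀ x t : ℝ, 0 ≤ x → x ≤ L → 0 ≤ t →
      v x t = (∑ n ∈ Finset.Icc (0 : ℤ) ⌊(c1 * t + x - L) / (2 * L)⌋,
                  H (t + (x - (2 * (n : ℝ) + 1) * L) / c1))
            - ∑ n ∈ Finset.Icc (0 : ℤ) ⌊(c1 * t - x - L) / (2 * L)⌋,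
                  H (t - (x + (2 * (n : ℝ) + 1) * L) / c1)) :
    ContDiffOn ℝ 2 (Function.uncurry v)
      {p : ℝ × ℝ | 0 < p.1 ∧ p.1 < L ∧ 0 < p.2} ∧
    ∀ x t : ℝ, 0 < x → x < L → 0 < t →
      deriv (deriv (fun s => v x s)) t = c1 ^ 2 * deriv (deriv (fun y => v y t)) x := by
  have h2L : (0:ℝ) < 2 * L := by linarith
  -- key : on the strip with time bound T and N big enough, v = wsum
  have key : ∀ (T : ℝ) (y s : ℝ), 0 ≤ y → y ≤ L → 0 ≤ s → s ≤ T →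
      v y s = wsum L c1 H ⌊c1 * T / (2*L)⌋ y s := by
    intro T y s h1 h2 h3 h4
    rw [hv y s h1 h2 h3]
    apply sums_eq_wsum L c1 hL hc1 H hH0 y s
    · apply Int.floor_le_floor
      gcongr
      nlinarith
    · apply Int.floor_le_floor
      gcongr
      nlinarith
  constructor
  · intro p hp
    obtain ⟨hx, hxL, ht⟩ := hp
    set T : ℝ := p.2 + 1 with hT
    set N : ℤ := ⌊c1 * T / (2*L)⌋ with hN
    have hw : ContDiff ℝ 2 (Function.uncurry (wsum L c1 H N)) := wsum_contDiff L c1 hc1 H hH N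
    have hO : IsOpen ((Set.Ioo (0:ℝ) L) ×ˢ (Set.Ioo (0:ℝ) T)) := (isOpen_Ioo).prod isOpen_Ioo
    have hpO : p ∈ (Set.Ioo (0:ℝ) L) ×ˢ (Set.Ioo (0:ℝ) T) :=
      ⟨⟨hx, hxL⟩, ⟨ht, lt_add_one _⟩⟩
    have heq : Function.uncurry v =ᶠ[nhds p] Function.uncurry (wsum L c1 H N) := by
      filter_upwards [hO.mem_nhds hpO] with q hq
      obtain ⟨⟨h1, h2⟩, h3, h4⟩ := hq
      exact key T q.1 q.2 h1.le h2.le h3.le h4.le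
    exact ((hw.contDiffAt).congr_of_eventuallyEq heq).contDiffWithinAt
  · intro x t hx hxL ht
    set T : ℝ := t + 1 with hT
    set N : ℤ := ⌊c1 * T / (2*L)⌋ with hN
    have heqt : (fun s => v x s) =ᶠ[nhds t] (fun s => wsum L c1 H N x s) := by
      filter_upwards [Ioo_mem_nhds ht (lt_add_one t)] with s hs
      exact key T x s hx.le hxL.le hs.1.le hs.2.le
    have heqx : (fun y => v y t) =ᶠ[nhds x] (fun y => wsum L c1 H N y t) := by
      filter_upwards [Ioo_mem_nhds hx hxL] with y hy
      exact key T y t hy.1.le hy.2.le ht.le (le_of_lt (lt_add_one t))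
    rw [Filter.EventuallyEq.deriv_eq (heqt.deriv), Filter.EventuallyEq.deriv_eq (heqx.deriv)]
    have e1 : (fun s => wsum L c1 H N x s)
        = fun s => (∑ n ∈ Finset.Icc (0:ℤ) N, (1:ℝ) * H (1 * s + (x - (2*(n:ℝ)+1)*L)/c1))
                 - ∑ n ∈ Finset.Icc (0:ℤ) N, (1:ℝ) * H (1 * s + (-((x + (2*(n:ℝ)+1)*L)/c1))) := by
      funext s
      unfold wsum
      congr 1 <;> refine Finset.sum_congr rfl fun n _ => ?_ <;>
        simp only [one_mul] <;> congr 1 <;> ring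
    have e2 : (fun y => wsum L c1 H N y t)
        = fun y => (∑ n ∈ Finset.Icc (0:ℤ) N, (1:ℝ) * H ((1/c1) * y + (t - (2*(n:ℝ)+1)*L/c1)))
                 - ∑ n ∈ Finset.Icc (0:ℤ) N, (1:ℝ) * H ((-(1/c1)) * y + (t - (2*(n:ℝ)+1)*L/c1)) := by
      funext y
      unfold wsum
      congr 1 <;> refine Finset.sum_congr rfl fun n _ => ?_ <;>
        simp only [one_mul] <;> congr 1 <;> ring
    rw [e1, e2, second_deriv H hH _ 1 1 1 1 _ _, second_deriv H hH _ (1/c1) (-(1/c1)) 1 1 _ _]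
    simp only
    rw [mul_sub, Finset.mul_sum, Finset.mul_sum]
    have hc1' : c1 ≠ 0 := ne_of_gt hc1
    congr 1 <;> refine Finset.sum_congr rfl fun n _ => ?_
    · have harg : (1:ℝ) * t + (x - (2*(n:ℝ)+1)*L)/c1 = (1/c1) * x + (t - (2*(n:ℝ)+1)*L/c1) := by
        ring
      rw [harg]; field_simp
    · have harg : (1:ℝ) * t + (-((x + (2*(n:ℝ)+1)*L)/c1))
          = (-(1/c1)) * x + (t - (2*(n:ℝ)+1)*L/c1) := by ring
      rw [harg]; field_simp
end

section
/- Assume H : ℝ → ℝ is continuously differentiable and H(s) = 0 for all s ≤ 0. Then for every t > 0, the one-sided spatial derivative of v at x = L satisfies ∂v/∂x (L,t) = (1/c1) H'(t) + (2/c1) Σ_{n=1}^{⌊c1 t/(2L)⌋} H'(t − 2nL/c1). -/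
/-!
For `-L ≤ x ≤ L` every term whose index exceeds `N = ⌊c1 t / (2L)⌋` has a negative argument and
vanishes, so near `x = L` both sums of `v(·, t)` run over the fixed range `0..N` and can be
differentiated termwise. At `x = L` the two derivative sums are `Σ_{n=0}^{N} H'(t − 2nL/c1)` and
the same sum shifted by one index; the extra term `H'(t − 2(N+1)L/c1)` is zero since its argument
is negative.
-/

open Finset

theorem sum_Icc_floor_eq_of_eq_zero {M : Type*} [AddCommMonoid M] {f : ℤ → M} {a b : ℝ}
    (hab : a ≤ b) (hf : ∀ n : ℤ, a < n → f n = 0) (m : ℤ) :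
    ∑ n ∈ Icc m ⌊a⌋, f n = ∑ n ∈ Icc m ⌊b⌋, f n :=
  sum_subset (Icc_subset_Icc_right (Int.floor_mono hab)) fun n hnb hna =>
    hf n <| Int.floor_lt.mp <| by
      simp only [mem_Icc, not_and_or, not_le] at hnb hna
      omega

theorem sum_Icc_add_sum_Icc_shift {M : Type*} [AddCommMonoid M] (f : ℤ → M) {N : ℤ}
    (hN : 0 ≤ N) (hf : f (N + 1) = 0) :
    ∑ n ∈ Icc 0 N, f n + ∑ n ∈ Icc 0 N, f (n + 1) = f 0 + 2 • ∑ n ∈ Icc 1 N, f n := by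
  have hshift : ∑ n ∈ Icc 0 N, f (n + 1) = ∑ n ∈ Icc 1 N, f n := by
    rw [← zero_add (∑ n ∈ Icc 1 N, f n), ← hf, ← sum_insert (by simp),
      insert_Icc_right_eq_Icc_add_one (by omega), show Icc (1 : ℤ) (N + 1) =
        (Icc 0 N).map (addRightEmbedding 1) by simp, sum_map]
    rfl
  rw [hshift, ← insert_Icc_add_one_left_eq_Icc hN, sum_insert (by simp), zero_add, two_smul,
    add_assoc]

theorem deriv_eq_zero_of_forall_nonpos_eq_zero {H : ℝ → ℝ} (hH0 : ∀ s ≤ (0 : ℝ), H s = 0)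
    {s : ℝ} (hs : s < 0) : deriv H s = 0 := by
  have hH : H =ᶠ[nhds s] fun _ => 0 := by
    filter_upwards [Iio_mem_nhds hs] with y hy using hH0 y hy.le
  simp [hH.deriv_eq]

section Reflections

variable {L c1 : ℝ} {H : ℝ → ℝ}

theorem sum_reflections_eq_sum_Icc_floor (hL : 0 < L) (hc1 : 0 < c1)
    (hH0 : ∀ s ≤ (0 : ℝ), H s = 0) {x : ℝ} (hx₀ : -L ≤ x) (hx₁ : x ≤ L) (t : ℝ) :
    (∑ n ∈ Icc (0 : ℤ) ⌊(c1 * t + x - L) / (2 * L)⌋, H (t + (x - (2 * (n : ℝ) + 1) * L) / c1))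
        - ∑ n ∈ Icc (0 : ℤ) ⌊(c1 * t - x - L) / (2 * L)⌋,
            H (t - (x + (2 * (n : ℝ) + 1) * L) / c1)
      = (∑ n ∈ Icc (0 : ℤ) ⌊c1 * t / (2 * L)⌋, H (t + (x - (2 * (n : ℝ) + 1) * L) / c1))
        - ∑ n ∈ Icc (0 : ℤ) ⌊c1 * t / (2 * L)⌋, H (t - (x + (2 * (n : ℝ) + 1) * L) / c1) := by
  have h2L : 0 < 2 * L := by positivity
  congr 1
  · refine sum_Icc_floor_eq_of_eq_zero (by gcongr; linarith) (fun n hn => hH0 _ ?_) 0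
    rw [div_lt_iff₀ h2L] at hn
    have : (x - (2 * (n : ℝ) + 1) * L) / c1 ≤ -t := by rw [div_le_iff₀ hc1]; linarith
    linarith
  · refine sum_Icc_floor_eq_of_eq_zero (by gcongr; linarith) (fun n hn => hH0 _ ?_) 0
    rw [div_lt_iff₀ h2L] at hn
    have : t ≤ (x + (2 * (n : ℝ) + 1) * L) / c1 := by rw [le_div_iff₀ hc1]; linarith
    linarith

theorem hasDerivAt_sum_reflections (hH : Differentiable ℝ H) (s : Finset ℤ) (t x : ℝ) :
    HasDerivAt (fun x => (∑ n ∈ s, H (t + (x - (2 * (n : ℝ) + 1) * L) / c1))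
        - ∑ n ∈ s, H (t - (x + (2 * (n : ℝ) + 1) * L) / c1))
      ((∑ n ∈ s, deriv H (t + (x - (2 * (n : ℝ) + 1) * L) / c1)
        + ∑ n ∈ s, deriv H (t - (x + (2 * (n : ℝ) + 1) * L) / c1)) / c1) x := by
  have hinc : ∀ n : ℤ, HasDerivAt (fun x => H (t + (x - (2 * (n : ℝ) + 1) * L) / c1))
      (deriv H (t + (x - (2 * (n : ℝ) + 1) * L) / c1) * (1 / c1)) x := fun n =>
    (hH _).hasDerivAt.comp x ((((hasDerivAt_id' x).sub_const _).div_const c1).const_add t)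
  have hdec : ∀ n : ℤ, HasDerivAt (fun x => H (t - (x + (2 * (n : ℝ) + 1) * L) / c1))
      (deriv H (t - (x + (2 * (n : ℝ) + 1) * L) / c1) * -(1 / c1)) x := fun n =>
    (hH _).hasDerivAt.comp x ((((hasDerivAt_id' x).add_const _).div_const c1).const_sub t)
  refine ((HasDerivAt.fun_sum fun n _ => hinc n).fun_sub
    (HasDerivAt.fun_sum fun n _ => hdec n)).congr_deriv ?_
  rw [← sum_mul, ← sum_mul]
  ring

theorem sum_reflection_derivs_at_boundary (hL : 0 < L) (hc1 : 0 < c1)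
    (hH0 : ∀ s ≤ (0 : ℝ), H s = 0) {t : ℝ} (ht : 0 ≤ t) :
    (∑ n ∈ Icc (0 : ℤ) ⌊c1 * t / (2 * L)⌋, deriv H (t + (L - (2 * (n : ℝ) + 1) * L) / c1)
        + ∑ n ∈ Icc (0 : ℤ) ⌊c1 * t / (2 * L)⌋, deriv H (t - (L + (2 * (n : ℝ) + 1) * L) / c1))
        / c1
      = 1 / c1 * deriv H t + 2 / c1 * ∑ n ∈ Icc (1 : ℤ) ⌊c1 * t / (2 * L)⌋,
          deriv H (t - 2 * (n : ℝ) * L / c1) := by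
  set N := ⌊c1 * t / (2 * L)⌋
  set f : ℤ → ℝ := fun n => deriv H (t - 2 * (n : ℝ) * L / c1)
  have hN : 0 ≤ N := Int.floor_nonneg.mpr (by positivity)
  have hfN : f (N + 1) = 0 := by
    refine deriv_eq_zero_of_forall_nonpos_eq_zero hH0 ?_
    have hlt : c1 * t < (N + 1) * (2 * L) := by
      rw [← div_lt_iff₀ (by positivity)]; exact Int.lt_floor_add_one _
    rw [sub_neg, lt_div_iff₀ hc1]; push_cast; linarith
  calc _ = (∑ n ∈ Icc 0 N, f n + ∑ n ∈ Icc 0 N, f (n + 1)) / c1 := by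
        congr 2 <;> refine sum_congr rfl fun n _ => congrArg (deriv H) ?_ <;> push_cast <;>
          field_simp <;> ring
    _ = (f 0 + 2 • ∑ n ∈ Icc 1 N, f n) / c1 := by rw [sum_Icc_add_sum_Icc_shift f hN hfN]
    _ = _ := by simp only [f, Int.cast_zero, mul_zero, zero_mul, zero_div, sub_zero, two_smul]; ring

end Reflections

/-- the one-sided (from the left) spatial derivative of `v` at `x = L`
equals `(1/c1) H'(t) + (2/c1) Σ_{n=1}^{⌊c1 t/(2L)⌋} H'(t − 2nL/c1)` for every `t > 0`. -/
theorem stmt_6 (L c1 : ℝ) (hL : 0 < L) (hc1 : 0 < c1)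
    (H : ℝ → ℝ) (hH : ContDiff ℝ 1 H) (hH0 : ∀ s ≤ (0 : ℝ), H s = 0)
    (v : ℝ → ℝ → ℝ)
    (hv : ∀ x t : ℝ, 0 ≤ x → x ≤ L → 0 ≤ t →
      v x t = (∑ n ∈ Finset.Icc (0 : ℤ) ⌊(c1 * t + x - L) / (2 * L)⌋,
                  H (t + (x - (2 * (n : ℝ) + 1) * L) / c1))
            - ∑ n ∈ Finset.Icc (0 : ℤ) ⌊(c1 * t - x - L) / (2 * L)⌋,
                  H (t - (x + (2 * (n : ℝ) + 1) * L) / c1)) :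
    ∀ t : ℝ, 0 < t →
      HasDerivWithinAt (fun x => v x t)
        (1 / c1 * deriv H t
          + 2 / c1 * ∑ n ∈ Finset.Icc (1 : ℤ) ⌊c1 * t / (2 * L)⌋,
              deriv H (t - 2 * (n : ℝ) * L / c1))
        (Set.Iio L) L := by
  intro t ht
  have hv' : ∀ x ∈ Set.Icc 0 L, v x t = _ := fun x hx => (hv x t hx.1 hx.2 ht.le).trans
    (sum_reflections_eq_sum_Icc_floor hL hc1 hH0 (by linarith [hx.1]) hx.2 t)
  have hderiv := hasDerivAt_sum_reflections (L := L) (c1 := c1) (hH.differentiable one_ne_zero)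
    (Icc 0 ⌊c1 * t / (2 * L)⌋) t L
  rw [sum_reflection_derivs_at_boundary hL hc1 hH0 ht.le] at hderiv
  refine hderiv.hasDerivWithinAt.congr_of_eventuallyEq ?_ (hv' L ⟨hL.le, le_rfl⟩)
  filter_upwards [self_mem_nhdsWithin, mem_nhdsWithin_of_mem_nhds (Ioi_mem_nhds hL)]
    with x hxL hx0 using hv' x ⟨le_of_lt hx0, le_of_lt hxL⟩
end
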